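/- The integrated Bayes factor satisfies ∫₀¹ H(α) dα − 1 ≤ (1/(2·sqrt((φ+t−1)(φ+t))))·log((sqrt(φ+t)+sqrt(φ+t−1))/(sqrt(φ+t)−sqrt(φ+t−1))). -/

import Mathlib

/-!
Since `A(α) < 0` on `(0, 1)`, the exponential factor of `H` is at most `1`, so
`∫₀¹ H ≤ ∫₀¹ κ`, and the latter integral is computed exactly. With `c = φ + t − 1`,
`κ(α) = √(cα + 1) / √(α (c + 1))` has the primitive
`(√α √(cα + 1) + arsinh (√(cα)) / √c) / √(c + 1)`, whence
`∫₀¹ κ = 1 + arsinh √c / √(c (c + 1))`. The right-hand side of the bound is the same number,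
because `(√(c+1) + √c) / (√(c+1) − √c) = (√(c+1) + √c)² = exp (2 arsinh √c)`.
-/

open MeasureTheory Real Set

/-- The paper's `κ(α)`, written with `c = φ + t − 1`. -/
noncomputable def kappa (c α : ℝ) : ℝ := ((α * c + 1) / (α * (c + 1))) ^ ((1 : ℝ) / 2)

noncomputable def kappaPrimitive (c x : ℝ) : ℝ :=
  (√x * √(c * x + 1) + arsinh (√c * √x) / √c) / √(c + 1)

variable {c x : ℝ}

lemma kappa_eq_sqrt_div (hc : 0 ≤ c) (hx : 0 ≤ x) :
    kappa c x = √(c * x + 1) / (√x * √(c + 1)) := by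
  rw [kappa, ← sqrt_eq_rpow, sqrt_div (by positivity), sqrt_mul hx, mul_comm x c]

lemma hasDerivAt_kappaPrimitive (hc : 0 < c) (hx : 0 < x) :
    HasDerivAt (kappaPrimitive c) (kappa c x) x := by
  have hcx : 0 < c * x + 1 := by positivity
  have hsx : HasDerivAt (√·) (1 / (2 * √x)) x := by
    simpa using (hasDerivAt_id' x).sqrt hx.ne'
  have hsq : HasDerivAt (fun y => √(c * y + 1)) (c / (2 * √(c * x + 1))) x := by
    simpa using (((hasDerivAt_id' x).const_mul c).add_const 1).sqrt hcx.ne'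
  refine (((hsx.mul hsq).add ((hsx.const_mul √c).arsinh.div_const √c)).div_const
    √(c + 1)).congr_deriv ?_
  have hx' : 0 < √x := sqrt_pos.2 hx
  have hc' : 0 < √c := sqrt_pos.2 hc
  have hcx' : 0 < √(c * x + 1) := sqrt_pos.2 hcx
  rw [kappa_eq_sqrt_div hc.le hx.le, smul_eq_mul, mul_pow, sq_sqrt hc.le, sq_sqrt hx.le,
    add_comm 1 (c * x)]
  field_simp
  rw [sq_sqrt hx.le, sq_sqrt hcx.le]
  ring

lemma continuous_kappaPrimitive (c : ℝ) : Continuous (kappaPrimitive c) := by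
  unfold kappaPrimitive
  exact (((continuous_sqrt.mul (continuous_sqrt.comp (by fun_prop))).add
    ((continuous_arsinh.comp (continuous_const.mul continuous_sqrt)).div_const _)).div_const _)

lemma kappaPrimitive_zero (c : ℝ) : kappaPrimitive c 0 = 0 := by
  simp [kappaPrimitive]

lemma kappaPrimitive_one (hc : 0 < c) :
    kappaPrimitive c 1 = 1 + arsinh √c / √(c * (c + 1)) := by
  have : 0 < √(c + 1) := sqrt_pos.2 (by positivity)
  have : 0 < √c := sqrt_pos.2 hc
  rw [kappaPrimitive, sqrt_mul hc.le, mul_one, sqrt_one, one_mul, mul_one]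
  field_simp

lemma kappa_nonneg (hc : 0 ≤ c) (hx : 0 ≤ x) : 0 ≤ kappa c x := by
  unfold kappa; positivity

lemma integrableOn_kappa (hc : 0 < c) : IntegrableOn (kappa c) (Ioc 0 1) :=
  intervalIntegral.integrableOn_deriv_of_nonneg (continuous_kappaPrimitive c).continuousOn
    (fun _ hx => hasDerivAt_kappaPrimitive hc hx.1) (fun _ hx => kappa_nonneg hc.le hx.1.le)

lemma setIntegral_kappa (hc : 0 < c) :
    ∫ α in Ioo 0 1, kappa c α = 1 + arsinh √c / √(c * (c + 1)) := by
  rw [← integral_Ioc_eq_integral_Ioo, ← intervalIntegral.integral_of_le zero_le_one,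
    intervalIntegral.integral_eq_sub_of_hasDerivAt_of_le zero_le_one
      (continuous_kappaPrimitive c).continuousOn (fun _ hx => hasDerivAt_kappaPrimitive hc hx.1)
      ((intervalIntegrable_iff_integrableOn_Ioc_of_le zero_le_one).2 (integrableOn_kappa hc)),
    kappaPrimitive_one hc, kappaPrimitive_zero, sub_zero]

lemma log_sqrt_add_div_sqrt_sub (hc : 0 ≤ c) :
    log ((√(c + 1) + √c) / (√(c + 1) - √c)) = 2 * arsinh √c := by
  have hprod : (√(c + 1) + √c) * (√(c + 1) - √c) = 1 := by
    ring_nf; rw [sq_sqrt (by linarith), sq_sqrt hc]; ring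
  rw [div_eq_mul_inv, ← eq_inv_of_mul_eq_one_left hprod, ← sq, log_pow, arsinh, sq_sqrt hc,
    add_comm 1 c, add_comm √c]
  norm_num

lemma bayesFactor_exponent_nonpos (σ : ℝ) {d α : ℝ} (hd : 0 ≤ d) (hc : 0 ≤ c) (hα₀ : 0 ≤ α)
    (hα₁ : α ≤ 1) : d / (2 * σ ^ 2 * (c + 1) * (α * c + 1) / ((α - 1) * c)) ≤ 0 :=
  div_nonpos_of_nonneg_of_nonpos hd <|
    div_nonpos_of_nonneg_of_nonpos (by positivity) (mul_nonpos_of_nonpos_of_nonneg (by linarith) hc)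

theorem integrated_bf_bound_general
    (σ φ t m y : ℝ) (hφ : 0 < φ) (ht : 1 < t) :
    (∫ α in Set.Ioo (0:ℝ) 1,
        ((α * (φ + t - 1) + 1) / (α * (φ + t))) ^ ((1:ℝ) / 2) *
          Real.exp ((y - m) ^ 2 /
            (2 * σ ^ 2 * (φ + t) * (α * (φ + t - 1) + 1) / ((α - 1) * (φ + t - 1))))) - 1 ≤
      (1 / (2 * Real.sqrt ((φ + t - 1) * (φ + t)))) *
        Real.log ((Real.sqrt (φ + t) + Real.sqrt (φ + t - 1)) /
          (Real.sqrt (φ + t) - Real.sqrt (φ + t - 1))) := by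
  set c := φ + t - 1 with hc_def
  have hc : 0 < c := by linarith
  rw [show φ + t = c + 1 by linarith, log_sqrt_add_div_sqrt_sub hc.le]
  have hle : ∫ α in Ioo 0 1, kappa c α *
      exp ((y - m) ^ 2 / (2 * σ ^ 2 * (c + 1) * (α * c + 1) / ((α - 1) * c))) ≤
      ∫ α in Ioo 0 1, kappa c α := by
    refine setIntegral_mono_of_nonneg (fun α hα => ?_) (fun α hα => ?_)
      ((integrableOn_kappa hc).mono_set Ioo_subset_Ioc_self)
    · exact mul_nonneg (kappa_nonneg hc.le hα.1.le) (exp_pos _).le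
    · refine mul_le_of_le_one_right (kappa_nonneg hc.le hα.1.le) (exp_le_one_iff.2 ?_)
      exact bayesFactor_exponent_nonpos σ (sq_nonneg _) hc.le hα.1.le hα.2.le
  calc _ ≤ (∫ α in Ioo 0 1, kappa c α) - 1 := sub_le_sub_right hle 1
    _ = _ := by rw [setIntegral_kappa hc]; ring

/-- The integrated Bayes factor satisfies
`∫₀¹ H(α) dα − 1 ≤ (1/(2√((φ+t−1)(φ+t)))) log((√(φ+t)+√(φ+t−1))/(√(φ+t)−√(φ+t−1)))`. -/
theorem integrated_bf_bound
    (σ φ t m y : ℝ) (hσ : 0 < σ) (hφ : 0 < φ) (ht : 1 < t) :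
    (∫ α in Set.Ioo (0:ℝ) 1,
        ((α * (φ + t - 1) + 1) / (α * (φ + t))) ^ ((1:ℝ) / 2) *
          Real.exp ((y - m) ^ 2 /
            (2 * σ ^ 2 * (φ + t) * (α * (φ + t - 1) + 1) / ((α - 1) * (φ + t - 1))))) - 1 ≤
      (1 / (2 * Real.sqrt ((φ + t - 1) * (φ + t)))) *
        Real.log ((Real.sqrt (φ + t) + Real.sqrt (φ + t - 1)) /
          (Real.sqrt (φ + t) - Real.sqrt (φ + t - 1))) :=
  integrated_bf_bound_general σ φ t m y hφ ht
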